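/- For a finite groupoid 𝒢 and a 𝒢-set X, the Burnside ring B(𝒢 ⋊ X) of the action groupoid is isomorphic to the crossed Burnside ring B_Had(𝒢, X) := K₀(Set^𝒢/X, ⊔, ×_X) of X with the Hadamard product. -/

import Mathlib

open CategoryTheory

universe v u w


section K0
variable (C : Type*) [Category C]

/-- The isomorphism class of an object. -/
def isoCl (X : C) : _root_.Quotient (isIsomorphicSetoid C) := Quotient.mk _ X

/-- The ideal of relations defining the Grothendieck ring `K₀(C, ⊔, ⊗)`:
`[X ⊔ Y] = [X] + [Y]`, `[X ⊗ Y] = [X]·[Y]` and `[unit] = 1`. -/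
noncomputable def k0Ideal (t c : C → C → C) (e : C) :
    Ideal (MvPolynomial (_root_.Quotient (isIsomorphicSetoid C)) ℤ) :=
  Ideal.span
    ((Set.range fun p : C × C =>
        MvPolynomial.X (isoCl C (c p.1 p.2)) - MvPolynomial.X (isoCl C p.1) -
          MvPolynomial.X (isoCl C p.2)) ∪
     (Set.range fun p : C × C =>
        MvPolynomial.X (isoCl C (t p.1 p.2)) -
          MvPolynomial.X (isoCl C p.1) * MvPolynomial.X (isoCl C p.2)) ∪
     {MvPolynomial.X (isoCl C e) - 1})

/-- The Grothendieck ring `K₀(C, ⊔, ⊗)` of a category equipped with a coproduct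
operation `c`, a tensor product operation `t` and a unit object `e`: the commutative
ring generated by the isomorphism classes of objects of `C` subject to the relations
`[X ⊔ Y] = [X] + [Y]`, `[X ⊗ Y] = [X]·[Y]` and `[e] = 1`.  Its underlying additive
group is the group completion of the monoid of isomorphism classes under `⊔`. -/
def K0 (t c : C → C → C) (e : C) : Type _ :=
  MvPolynomial (_root_.Quotient (isIsomorphicSetoid C)) ℤ ⧸ k0Ideal C t c e

noncomputable instance (t c : C → C → C) (e : C) : CommRing (K0 C t c e) :=
  inferInstanceAs
    (CommRing (MvPolynomial (_root_.Quotient (isIsomorphicSetoid C)) ℤ ⧸ k0Ideal C t c e))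

/-- The class of an object of `C` in the Grothendieck ring `K₀(C, ⊔, ⊗)`. -/
noncomputable def K0.of (t c : C → C → C) (e : C) (X : C) : K0 C t c e :=
  Ideal.Quotient.mk (k0Ideal C t c e) (MvPolynomial.X (isoCl C X))

end K0

section Sets
variable {J : Type w} [Category.{v} J]

/-- Pointwise product of functors to finite sets. -/
@[simps] def prodF (X Y : J ⥤ FintypeCat.{v}) : J ⥤ FintypeCat.{v} where
  obj g := FintypeCat.of (X.obj g × Y.obj g)
  map h := FintypeCat.homMk fun p => (X.map h p.1, Y.map h p.2)
  map_id g := by apply FintypeCat.hom_ext; intro p; change (X.map (𝟙 g) p.1, Y.map (𝟙 g) p.2) = p; simp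
  map_comp f h := by apply FintypeCat.hom_ext; intro p; change (X.map (f ≫ h) p.1, Y.map (f ≫ h) p.2) = (X.map h (X.map f p.1), Y.map h (Y.map f p.2)); simp

/-- Pointwise coproduct (disjoint union) of functors to finite sets. -/
@[simps] def coprodF (X Y : J ⥤ FintypeCat.{v}) : J ⥤ FintypeCat.{v} where
  obj g := FintypeCat.of (X.obj g ⊕ Y.obj g)
  map h := FintypeCat.homMk fun p => Sum.map (X.map h) (Y.map h) p
  map_id g := by apply FintypeCat.hom_ext; intro p; change Sum.map (X.map (𝟙 g)) (Y.map (𝟙 g)) p = p; cases p <;> simp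
  map_comp f h := by apply FintypeCat.hom_ext; intro p; change Sum.map (X.map (f ≫ h)) (Y.map (f ≫ h)) p = Sum.map (X.map h) (Y.map h) (Sum.map (X.map f) (Y.map f) p); cases p <;> simp

/-- The terminal functor to finite sets. -/
def termF : J ⥤ FintypeCat.{v} := (Functor.const J).obj (FintypeCat.of PUnit)

variable (X : J ⥤ FintypeCat.{v})

/-- Coproducts in the slice category `Set^𝒢 / X`. -/
def coprodOver (u v : Over X) : Over X :=
  Over.mk (Y := coprodF u.left v.left)
    { app := fun g => FintypeCat.homMk fun p => Sum.elim (u.hom.app g) (v.hom.app g) p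
      naturality := by intro x y f; apply FintypeCat.hom_ext; intro p; cases p with
        | inl a => exact ConcreteCategory.congr_hom (u.hom.naturality f) a
        | inr b => exact ConcreteCategory.congr_hom (v.hom.naturality f) b }

/-- The pointwise fiber product of two objects of `Set^𝒢 / X` over `X`. -/
noncomputable def fiberF (u v : Over X) : J ⥤ FintypeCat.{v} where
  obj g :=
    letI : DecidablePred fun p : u.left.obj g × v.left.obj g =>
        u.hom.app g p.1 = v.hom.app g p.2 := fun _ => Classical.propDecidable _
    FintypeCat.of {p : u.left.obj g × v.left.obj g // u.hom.app g p.1 = v.hom.app g p.2}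
  map {g g'} h := FintypeCat.homMk fun p =>
    ⟨(u.left.map h p.1.1, v.left.map h p.1.2), by
      have hu := ConcreteCategory.congr_hom (u.hom.naturality h) p.1.1
      have hv := ConcreteCategory.congr_hom (v.hom.naturality h) p.1.2
      dsimp at hu hv ⊢
      rw [hu, hv, p.2]⟩
  map_id g := by
    apply FintypeCat.hom_ext; intro p
    apply Subtype.ext
    show (u.left.map (𝟙 g) p.1.1, v.left.map (𝟙 g) p.1.2) = p.1
    simp
  map_comp f h := by
    apply FintypeCat.hom_ext; intro p
    apply Subtype.ext
    show (u.left.map (f ≫ h) p.1.1, v.left.map (f ≫ h) p.1.2) = _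
    simp
    rfl


/-- The Hadamard product on `Set^𝒢 / X`: the fiber product over `X`. -/
noncomputable def hadamardOver (u v : Over X) : Over X :=
  Over.mk (Y := fiberF X u v)
    { app := fun g => FintypeCat.homMk fun p => u.hom.app g p.1.1
      naturality := by
        intro x y f
        apply FintypeCat.hom_ext; intro p
        exact ConcreteCategory.congr_hom (u.hom.naturality f) p.1.1 }

end Sets


/-!
A functor `Y` on the category of elements of `X` is the same as the object
`∐_{x ∈ X g} Y (g, x) → X g` of `Set^𝒢 / X`; conversely `u : U → X` is recovered from its
fibres `u⁻¹ x`. These constructions form an equivalence of categories which takes disjoint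
unions to disjoint unions, pointwise products to fibre products over `X` and the terminal
functor to `𝟙 X`, and whose inverse does the same in reverse. Such an equivalence induces a
bijection of isomorphism classes matching the defining relations of the two `K₀`-rings.
-/

lemma isoCl_eq_of_iso {C : Type*} [Category C] {a b : C} (i : a ≅ b) : isoCl C a = isoCl C b :=
  Quotient.sound ⟨i⟩

def CategoryTheory.Equivalence.isoClassesEquiv {C D : Type*} [Category C] [Category D]
    (E : C ≌ D) :
    _root_.Quotient (isIsomorphicSetoid C) ≃ _root_.Quotient (isIsomorphicSetoid D) where
  toFun := Quotient.map E.functor.obj fun _ _ ⟨i⟩ => ⟨E.functor.mapIso i⟩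
  invFun := Quotient.map E.inverse.obj fun _ _ ⟨i⟩ => ⟨E.inverse.mapIso i⟩
  left_inv := Quotient.ind fun a => _root_.Quotient.sound ⟨(E.unitIso.app a).symm⟩
  right_inv := Quotient.ind fun x => _root_.Quotient.sound ⟨E.counitIso.app x⟩

namespace K0
open MvPolynomial

variable {C D : Type*} [Category C] [Category D]

lemma map_k0Ideal_le {t c : C → C → C} {e : C} {t' c' : D → D → D} {e' : D}
    (φ : MvPolynomial (Quotient (isIsomorphicSetoid C)) ℤ →+*
      MvPolynomial (Quotient (isIsomorphicSetoid D)) ℤ) (F : C → D)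
    (hφ : ∀ a, φ (X (isoCl C a)) = X (isoCl D (F a)))
    (hc : ∀ a b, F (c a b) ≅ c' (F a) (F b)) (ht : ∀ a b, F (t a b) ≅ t' (F a) (F b))
    (he : F e ≅ e') :
    (k0Ideal C t c e).map φ ≤ k0Ideal D t' c' e' := by
  rw [k0Ideal, Ideal.map_span, Ideal.span_le]
  rintro _ ⟨_, ((⟨⟨a, b⟩, rfl⟩ | ⟨⟨a, b⟩, rfl⟩) | rfl), rfl⟩ <;>
    apply Ideal.subset_span
  · exact Or.inl (Or.inl ⟨(F a, F b), by simp [hφ, isoCl_eq_of_iso (hc a b)]⟩)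
  · exact Or.inl (Or.inr ⟨(F a, F b), by simp [hφ, isoCl_eq_of_iso (ht a b)]⟩)
  · exact Or.inr (by simp [hφ, isoCl_eq_of_iso he])

/-- The compatibilities of `E.inverse` are not implied by those of `E.functor`: the operations
`c'` and `t'` are arbitrary maps on objects and need not preserve isomorphism. -/
noncomputable def ringEquivOfEquivalence {t c : C → C → C} {e : C} {t' c' : D → D → D}
    {e' : D} (E : C ≌ D)
    (hc : ∀ a b, E.functor.obj (c a b) ≅ c' (E.functor.obj a) (E.functor.obj b))
    (ht : ∀ a b, E.functor.obj (t a b) ≅ t' (E.functor.obj a) (E.functor.obj b))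
    (he : E.functor.obj e ≅ e')
    (hc' : ∀ x y, E.inverse.obj (c' x y) ≅ c (E.inverse.obj x) (E.inverse.obj y))
    (ht' : ∀ x y, E.inverse.obj (t' x y) ≅ t (E.inverse.obj x) (E.inverse.obj y)) :
    K0 C t c e ≃+* K0 D t' c' e' :=
  let f := (renameEquiv ℤ E.isoClassesEquiv).toRingEquiv
  Ideal.quotientEquiv _ _ f <| le_antisymm
    (by
      change _ ≤ Ideal.map f _
      rw [← Ideal.comap_symm, ← Ideal.map_le_iff_le_comap]
      exact map_k0Ideal_le _ E.inverse.obj (fun _ => rename_X _ _) hc' ht'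
        (E.inverse.mapIso he.symm ≪≫ E.unitIso.symm.app e))
    (map_k0Ideal_le _ E.functor.obj (fun _ => rename_X _ _) hc ht he)

end K0

def Equiv.sigmaProdEquivPullback {ι : Type*} (α β : ι → Type*) :
    (Σ i, α i × β i) ≃
      Function.Pullback (Sigma.fst : (Σ i, α i) → ι) (Sigma.fst : (Σ i, β i) → ι) where
  toFun q := ⟨(⟨q.1, q.2.1⟩, ⟨q.1, q.2.2⟩), rfl⟩
  invFun p := ⟨p.1.1.1, p.1.1.2, p.2 ▸ p.1.2.2⟩
  left_inv _ := rfl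
  right_inv := by
    rintro ⟨⟨⟨i, a⟩, ⟨j, b⟩⟩, h⟩
    obtain rfl : i = j := h
    rfl

def Equiv.pullbackFiberEquivProd {α β γ : Type*} (f : α → γ) (g : β → γ) (c : γ) :
    {w : Function.Pullback f g // f w.1.1 = c} ≃ {a // f a = c} × {b // g b = c} where
  toFun w := (⟨w.1.1.1, w.2⟩, ⟨w.1.1.2, w.1.2 ▸ w.2⟩)
  invFun p := ⟨⟨(p.1.1, p.2.1), p.1.2.trans p.2.2.symm⟩, p.1.2⟩
  left_inv _ := rfl
  right_inv _ := rfl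

namespace FunctorToFintypeCat

variable {J : Type*} [Category J]

def isoOfEquivs {F F' : J ⥤ FintypeCat.{v}} (e : ∀ j, F.obj j ≃ F'.obj j)
    (he : ∀ {j j'} (f : j ⟶ j') (a : F.obj j), e j' (F.map f a) = F'.map f (e j a)) :
    F ≅ F' :=
  NatIso.ofComponents (fun j => FintypeCat.equivEquivIso (e j))
    fun f => FintypeCat.hom_ext _ _ (he f)

def overIsoOfEquivs {X : J ⥤ FintypeCat.{v}} {u u' : Over X}
    (e : ∀ j, u.left.obj j ≃ u'.left.obj j)
    (he : ∀ {j j'} (f : j ⟶ j') (a : u.left.obj j),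
      e j' (u.left.map f a) = u'.left.map f (e j a))
    (hw : ∀ j a, u'.hom.app j (e j a) = u.hom.app j a) : u ≅ u' :=
  Over.isoMk (isoOfEquivs e he) (by ext j a; exact hw j a)

lemma over_w_app_apply {X : J ⥤ FintypeCat.{v}} {u u' : Over X} (φ : u ⟶ u') (j : J)
    (a : u.left.obj j) : u'.hom.app j (φ.left.app j a) = u.hom.app j a :=
  ConcreteCategory.congr_hom (congrArg (fun α => NatTrans.app α j) (Over.w φ)) a

end FunctorToFintypeCat

namespace CategoryTheory.CategoryOfElements

open FunctorToFintypeCat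

lemma sigma_mk_map_eq_of_val_eq {C : Type*} [Category C] {F : C ⥤ Type w}
    (Y : F.Elements ⥤ FintypeCat.{v}) {p : F.Elements} {c : C} {x₁ x₂ : F.obj c}
    (f₁ : p ⟶ F.elementsMk c x₁) (f₂ : p ⟶ F.elementsMk c x₂) (h : f₁.val = f₂.val)
    (y : Y.obj p) :
    (⟨x₁, Y.map f₁ y⟩ : Σ x, Y.obj (F.elementsMk c x)) = ⟨x₂, Y.map f₂ y⟩ := by
  obtain rfl : x₁ = x₂ := f₁.2.symm.trans (h ▸ f₂.2)
  rw [CategoryOfElements.ext F f₁ f₂ h]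

variable {G : Type u} [Category.{v} G] (X : G ⥤ FintypeCat.{v})

def liftHom {g g' : G} (h : g ⟶ g') (x : X.obj g) :
    (X ⋙ FintypeCat.incl).elementsMk g x ⟶ (X ⋙ FintypeCat.incl).elementsMk g' (X.map h x) :=
  homMk _ _ h rfl

def sigmaOverLeft (Y : (X ⋙ FintypeCat.incl).Elements ⥤ FintypeCat.{v}) :
    G ⥤ FintypeCat.{v} where
  obj g := FintypeCat.of (Σ x : X.obj g, Y.obj ((X ⋙ FintypeCat.incl).elementsMk g x))
  map h := FintypeCat.homMk fun p => ⟨X.map h p.1, Y.map (liftHom X h p.1) p.2⟩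
  map_id g := by
    ext1 ⟨x, y⟩
    exact (sigma_mk_map_eq_of_val_eq Y (liftHom X (𝟙 g) x) (𝟙 _) rfl y).trans (by simp)
  map_comp f h := by
    ext1 ⟨x, y⟩
    exact (sigma_mk_map_eq_of_val_eq Y (liftHom X (f ≫ h) x)
      (liftHom X f x ≫ liftHom X h _) rfl y).trans (by rw [Y.map_comp]; rfl)

def sigmaOver : ((X ⋙ FintypeCat.incl).Elements ⥤ FintypeCat.{v}) ⥤ Over X where
  obj Y := Over.mk (Y := sigmaOverLeft X Y) { app _ := FintypeCat.homMk Sigma.fst }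
  map η := Over.homMk
    { app _ := FintypeCat.homMk fun p => ⟨p.1, η.app _ p.2⟩
      naturality _ _ h := by
        ext1 ⟨x, y⟩
        exact congrArg (Sigma.mk _) (naturality _ _ η (liftHom X h x) y) }

def fibersObj (u : Over X) : (X ⋙ FintypeCat.incl).Elements ⥤ FintypeCat.{v} where
  obj p := FintypeCat.of {a : u.left.obj p.1 // u.hom.app p.1 a = p.2}
  map m := FintypeCat.homMk fun a =>
    ⟨u.left.map m.1 a.1, by rw [naturality _ _ u.hom m.1 a.1, a.2]; exact m.2⟩

def fibers : Over X ⥤ ((X ⋙ FintypeCat.incl).Elements ⥤ FintypeCat.{v}) where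
  obj := fibersObj X
  map φ :=
    { app p := FintypeCat.homMk fun a =>
        ⟨φ.left.app p.1 a.1, (over_w_app_apply φ p.1 a.1).trans a.2⟩
      naturality _ _ m := by
        ext1 a
        exact Subtype.ext (naturality _ _ φ.left m.1 a.1) }

def functorEquivOver : ((X ⋙ FintypeCat.incl).Elements ⥤ FintypeCat.{v}) ≌ Over X :=
  Equivalence.mk (sigmaOver X) (fibers X)
    (NatIso.ofComponents
      (fun Y => isoOfEquivs
        (fun p => (Equiv.sigmaSubtype
          (β := fun x => Y.obj ((X ⋙ FintypeCat.incl).elementsMk p.1 x)) p.2).symm)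
        fun m a => Subtype.ext (sigma_mk_map_eq_of_val_eq Y m (liftHom X m.1 _) rfl a))
      fun _ => by ext; rfl)
    (NatIso.ofComponents
      (fun u => overIsoOfEquivs (fun g => Equiv.sigmaFiberEquiv (u.hom.app g))
        (fun _ _ => rfl) fun _ a => a.2.2)
      fun _ => by ext; rfl)

def sigmaOverCoprodIso (Y Z : (X ⋙ FintypeCat.incl).Elements ⥤ FintypeCat.{v}) :
    (sigmaOver X).obj (coprodF Y Z) ≅ coprodOver X ((sigmaOver X).obj Y) ((sigmaOver X).obj Z) :=
  overIsoOfEquivs (fun _ => Equiv.sigmaSumDistrib _ _)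
    (by rintro _ _ _ ⟨_, _ | _⟩ <;> rfl) (by rintro _ ⟨_, _ | _⟩ <;> rfl)

noncomputable def sigmaOverProdIso (Y Z : (X ⋙ FintypeCat.incl).Elements ⥤ FintypeCat.{v}) :
    (sigmaOver X).obj (prodF Y Z) ≅ hadamardOver X ((sigmaOver X).obj Y) ((sigmaOver X).obj Z) :=
  overIsoOfEquivs (fun _ => Equiv.sigmaProdEquivPullback _ _) (fun _ _ => rfl) fun _ _ => rfl

def sigmaOverTermIso : (sigmaOver X).obj termF ≅ Over.mk (𝟙 X) :=
  overIsoOfEquivs (fun g => Equiv.sigmaPUnit (X.obj g)) (fun _ _ => rfl) fun _ _ => rfl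

def fibersCoprodIso (u u' : Over X) :
    (fibers X).obj (coprodOver X u u') ≅ coprodF ((fibers X).obj u) ((fibers X).obj u') :=
  isoOfEquivs (fun _ => Equiv.subtypeSum) (by rintro _ _ _ ⟨_ | _, _⟩ <;> rfl)

noncomputable def fibersHadamardIso (u u' : Over X) :
    (fibers X).obj (hadamardOver X u u') ≅ prodF ((fibers X).obj u) ((fibers X).obj u') :=
  isoOfEquivs (fun p => Equiv.pullbackFiberEquivProd (u.hom.app p.1) (u'.hom.app p.1) p.2)
    fun _ _ => rfl

end CategoryTheory.CategoryOfElements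

/-- For a finite groupoid `𝒢` and a `𝒢`-set `X`, the Burnside ring
`B(𝒢 ⋊ X) = K₀(Set^{𝒢 ⋊ X}, ⊔, ×)` of the action groupoid (the category of elements
of `X`) is isomorphic to the crossed Burnside ring
`B_Had(𝒢, X) = K₀(Set^𝒢 / X, ⊔, ×_X)` of `X` with the Hadamard product (the fiber
product over `X`), with unit the identity `X → X`. -/
theorem burnside_actionGroupoid_iso_hadamard_crossedBurnside
    (G : Type u) [Groupoid.{v} G] [Fintype G] [∀ x y : G, Fintype (x ⟶ y)]
    (X : G ⥤ FintypeCat.{v}) :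
    Nonempty
      (K0 ((X ⋙ FintypeCat.incl).Elements ⥤ FintypeCat.{v}) prodF coprodF termF ≃+*
        K0 (Over X) (hadamardOver X) (coprodOver X) (Over.mk (𝟙 X))) :=
  open CategoryOfElements in
  ⟨K0.ringEquivOfEquivalence (functorEquivOver X) (sigmaOverCoprodIso X) (sigmaOverProdIso X)
    (sigmaOverTermIso X) (fibersCoprodIso X) (fibersHadamardIso X)⟩
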